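/- arXiv:2504.03279 — 4 statements merged into one kernel-verified Lean document; each statement's English description precedes it below -/
import Mathlib

section
/- Early projection of a leaf relation is correct: let R be a relation over A, S over B, and O a set of output attributes with O ∩ B ⊆ A (all output attributes of S also appear in R). Then π_{O ∩ (A∪B)}(R ⋈ S) = π_{O ∩ A}(R ⋈ π_{A ∩ B} S). -/
open Finset

variable {α V : Type*}

/-- Restriction of a tuple to attribute set `A`, padding with default value `d`. -/
def restrict [DecidableEq α] (d : V) (A : Finset α) (t : α → V) : α → V :=
  fun a => if a ∈ A then t a else d

/-- `R` is a relation over attribute set `A`: all its tuples are supported on `A`. -/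
def isRelOver [DecidableEq α] (d : V) (A : Finset α) (R : Finset (α → V)) : Prop :=
  ∀ t ∈ R, restrict d A t = t

/-- Combine a tuple over `A` with a tuple over `B` into a tuple over `A ∪ B`. -/
def combine [DecidableEq α] (d : V) (A B : Finset α) (t s : α → V) : α → V :=
  fun a => if a ∈ A then t a else if a ∈ B then s a else d

/-- Natural join of `R` (over `A`) and `S` (over `B`): tuples over `A ∪ B` whose
restrictions to `A` and `B` lie in `R` and `S`. -/
def join [DecidableEq α] [DecidableEq V] [DecidableEq (α → V)]
    (d : V) (A B : Finset α) (R S : Finset (α → V)) : Finset (α → V) :=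
  ((R ×ˢ S).filter (fun p => ∀ a ∈ A ∩ B, p.1 a = p.2 a)).image
    (fun p => combine d A B p.1 p.2)

/-- Projection of relation `R` onto attribute set `X`. -/
def proj [DecidableEq α] [DecidableEq (α → V)] (d : V) (X : Finset α)
    (R : Finset (α → V)) : Finset (α → V) :=
  R.image (restrict d X)

/-- Semijoin `R ⋉ S` where `R` is over `A` and `S` is over `B`. -/
def semijoin [DecidableEq α] [DecidableEq V]
    (A B : Finset α) (R S : Finset (α → V)) : Finset (α → V) :=
  R.filter (fun t => ∃ s ∈ S, ∀ a ∈ A ∩ B, t a = s a)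

/-- early projection of a leaf relation is correct when all output
attributes of `S` also appear in `R`. -/
theorem early_projection_correct [DecidableEq α] [DecidableEq V] [DecidableEq (α → V)]
    (d : V) (A B O : Finset α) (R S : Finset (α → V))
    (hR : isRelOver d A R) (hS : isRelOver d B S) (hOB : O ∩ B ⊆ A) :
    proj d (O ∩ (A ∪ B)) (join d A B R S)
      = proj d (O ∩ A) (join d A (A ∩ B) R (proj d (A ∩ B) S)) := by
  have hOA : O ∩ (A ∪ B) = O ∩ A := by
    ext a
    simp only [mem_inter, mem_union]
    constructor
    · rintro ⟨hO, hA | hB⟩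
      · exact ⟨hO, hA⟩
      · exact ⟨hO, hOB (mem_inter.mpr ⟨hO, hB⟩)⟩
    · rintro ⟨hO, hA⟩; exact ⟨hO, Or.inl hA⟩
  rw [hOA]
  have key : ∀ (C : Finset α) (t s : α → V),
      restrict d (O ∩ A) (combine d A C t s) = restrict d (O ∩ A) t := by
    intro C t s
    funext a
    by_cases h : a ∈ O ∩ A
    · have hA : a ∈ A := (mem_inter.mp h).2
      simp [_root_.restrict, combine, h, hA]
    · simp [_root_.restrict, h]
  ext u
  simp only [proj, join, mem_image, mem_filter, mem_product]
  constructor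
  · rintro ⟨v, ⟨⟨t, s⟩, ⟨⟨ht, hs⟩, hm⟩, rfl⟩, rfl⟩
    refine ⟨combine d A (A ∩ B) t (restrict d (A ∩ B) s),
      ⟨⟨t, restrict d (A ∩ B) s⟩, ⟨⟨ht, ⟨s, hs, rfl⟩⟩, ?_⟩, rfl⟩, by rw [key, key]⟩
    intro a ha
    have ha' : a ∈ A ∩ B := by
      simp only [mem_inter] at ha ⊢
      exact ⟨ha.1, ha.2.2⟩
    simp only [_root_.restrict, ha', if_pos]
    exact hm a ha'
  · rintro ⟨v, ⟨⟨t, s'⟩, ⟨⟨ht, ⟨s, hs, rfl⟩⟩, hm⟩, rfl⟩, rfl⟩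
    refine ⟨combine d A B t s, ⟨⟨t, s⟩, ⟨⟨ht, hs⟩, ?_⟩, rfl⟩, by rw [key, key]⟩
    intro a ha
    have := hm a (by simp only [mem_inter] at ha ⊢; exact ⟨ha.1, ha.1, ha.2⟩)
    simpa [_root_.restrict, ha] using this
end

section
/- Semijoining a child with a dangling-free relation makes it dangling-free and preserves the query: let R_1, …, R_n be relations over attribute sets A_1, …, A_n with full join J = R_1 ⋈ ⋯ ⋈ R_n. Suppose R_i is dangling-free, i.e., every tuple of R_i extends to a tuple of J. Then (a) replacing R_j by R_j' := R_j ⋉ R_i leaves J unchanged, and (b) every tuple of R_j' extends to a tuple of J, provided A_j ∩ A_k ⊆ A_i for all k ≠ j (the join-tree condition that R_i separates R_j from the other relations). -/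
open Finset

variable {α V : Type*}

/-- Multiway natural join of relations `R k` over attribute sets `A k`, as a set of
tuples over the union of all attributes. -/
def mjoinSet [DecidableEq α] {n : ℕ} (d : V) (A : Fin n → Finset α)
    (R : Fin n → Finset (α → V)) : Set (α → V) :=
  {t | restrict d (Finset.univ.sup A) t = t ∧ ∀ k, restrict d (A k) t ∈ R k}

/-- semijoining child `R j` with a dangling-free `R i` preserves the
full join and makes `R j` dangling-free, given the join-tree separation condition. -/
theorem semijoin_child_dangling_free [DecidableEq α] [DecidableEq V] {n : ℕ}
    (d : V) (A : Fin n → Finset α) (R : Fin n → Finset (α → V))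
    (hRel : ∀ k, isRelOver d (A k) (R k)) (i j : Fin n) (hij : i ≠ j)
    (hdf : ∀ t ∈ R i, ∃ t' ∈ mjoinSet d A R, restrict d (A i) t' = t)
    (hsep : ∀ k, k ≠ j → A j ∩ A k ⊆ A i) :
    mjoinSet d A (Function.update R j (semijoin (A j) (A i) (R j) (R i)))
        = mjoinSet d A R ∧
      ∀ t ∈ semijoin (A j) (A i) (R j) (R i),
        ∃ t' ∈ mjoinSet d A R, restrict d (A j) t' = t := by
  have hsub : ∀ k : Fin n, A k ⊆ Finset.univ.sup A := fun k => Finset.le_sup (mem_univ k)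
  constructor
  · ext t
    simp only [mjoinSet, Set.mem_setOf_eq]
    constructor
    · rintro ⟨h1, h2⟩
      refine ⟨h1, fun k => ?_⟩
      have hk2 := h2 k
      by_cases hk : k = j
      · subst hk
        rw [Function.update_self] at hk2
        exact (Finset.mem_filter.mp hk2).1
      · rwa [Function.update_of_ne hk] at hk2
    · rintro ⟨h1, h2⟩
      refine ⟨h1, fun k => ?_⟩
      by_cases hk : k = j
      · subst hk
        rw [Function.update_self]
        refine Finset.mem_filter.mpr ⟨h2 k, _root_.restrict d (A i) t, h2 i, fun a ha => ?_⟩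
        simp only [Finset.mem_inter] at ha
        simp [_root_.restrict, ha.1, ha.2]
      · rw [Function.update_of_ne hk]; exact h2 k
  · intro t ht
    rw [semijoin, Finset.mem_filter] at ht
    obtain ⟨htR, s, hs, hagree⟩ := ht
    obtain ⟨t', ⟨ht'sup, ht'mem⟩, ht'i⟩ := hdf s hs
    set t'' : α → V := fun a => if a ∈ A j then t a else t' a with ht''
    have hres : restrict d (A j) t'' = t := by
      funext a
      by_cases ha : a ∈ A j
      · simp [_root_.restrict, ht'', ha]
      · have h0 := congrFun (hRel j t htR) a
        simp only [_root_.restrict, ha, if_false] at h0 ⊢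
        exact h0
    refine ⟨t'', ⟨?_, fun k => ?_⟩, hres⟩
    · funext a
      by_cases ha : a ∈ Finset.univ.sup A
      · simp [_root_.restrict, ha]
      · have haj : a ∉ A j := fun h => ha (hsub j h)
        have h0 := congrFun ht'sup a
        simp only [_root_.restrict, ha, if_false] at h0 ⊢
        show d = if a ∈ A j then t a else t' a
        rw [if_neg haj, ← h0]
    · by_cases hk : k = j
      · subst hk; rw [hres]; exact htR
      · have heq : restrict d (A k) t'' = restrict d (A k) t' := by
          funext a
          by_cases ha : a ∈ A k
          · simp only [_root_.restrict, ha, if_true, ht'']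
            by_cases haj : a ∈ A j
            · have hai : a ∈ A i := hsep k hk (Finset.mem_inter.mpr ⟨haj, ha⟩)
              have h1 : t a = s a := hagree a (Finset.mem_inter.mpr ⟨haj, hai⟩)
              have h2 : t' a = s a := by
                have h3 := congrFun ht'i a
                simpa [_root_.restrict, hai] using h3
              simp [haj, h1, h2]
            · simp [haj]
          · simp [_root_.restrict, ha]
        rw [heq]; exact ht'mem k
end

section
/- Merging two relations in a join preserves the projected query: let Q = π_O(R_1 ⋈ ⋯ ⋈ R_n), and suppose for relations R_i (attributes A_i) and R_j (attributes A_j), every other relation R_k satisfies A_k ∩ (A_i ∪ A_j) ⊆ O ∪ (A_i Δ A_j). Then replacing R_i and R_j by R' := π_{(O ∪ (A_i Δ A_j)) ∩ (A_i ∪ A_j)}(R_i ⋈ R_j) yields a query with the same answer: π_O(R' ⋈ ⋈_{k≠i,j} R_k) = π_O(R_1 ⋈ ⋯ ⋈ R_n), where A Δ B denotes symmetric difference. -/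
open Finset

variable {α V : Type*}

lemma restrict_apply_of_mem [DecidableEq α] (d : V) {A : Finset α} {a : α}
    (h : a ∈ A) (t : α → V) : restrict d A t a = t a := if_pos h

lemma restrict_apply_of_not_mem [DecidableEq α] (d : V) {A : Finset α} {a : α}
    (h : a ∉ A) (t : α → V) : restrict d A t a = d := if_neg h

lemma restrict_restrict_of_subset [DecidableEq α] (d : V) {X Y : Finset α}
    (h : X ⊆ Y) (t : α → V) : restrict d X (restrict d Y t) = restrict d X t := by
  funext a
  by_cases ha : a ∈ X
  · rw [restrict_apply_of_mem d ha, restrict_apply_of_mem d ha,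
      restrict_apply_of_mem d (h ha)]
  · rw [restrict_apply_of_not_mem d ha, restrict_apply_of_not_mem d ha]

/-- merging `R i` and `R j` into
`Rm = π_{(O ∪ (A_i Δ A_j)) ∩ (A_i ∪ A_j)}(R_i ⋈ R_j)` preserves the projected query. -/
theorem merge_preserves_query [DecidableEq α] [DecidableEq V] [DecidableEq (α → V)]
    {n : ℕ} (d : V) (A : Fin n → Finset α) (R : Fin n → Finset (α → V))
    (hRel : ∀ k, isRelOver d (A k) (R k)) (O : Finset α) (i j : Fin n) (hij : i ≠ j)
    (hcond : ∀ k, k ≠ i → k ≠ j →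
      A k ∩ (A i ∪ A j) ⊆ O ∪ ((A i \ A j) ∪ (A j \ A i)))
    (J : Finset (α → V)) (hJ : ∀ t, t ∈ J ↔ t ∈ mjoinSet d A R)
    (Am : Finset α) (hAm : Am = (O ∪ ((A i \ A j) ∪ (A j \ A i))) ∩ (A i ∪ A j))
    (Rm : Finset (α → V)) (hRm : Rm = proj d Am (join d (A i) (A j) (R i) (R j)))
    (Jm : Finset (α → V))
    (hJm : ∀ t, t ∈ Jm ↔
      (restrict d (Am ∪ (Finset.univ.filter (fun k => k ≠ i ∧ k ≠ j)).sup A) t = t ∧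
        restrict d Am t ∈ Rm ∧
        ∀ k, k ≠ i → k ≠ j → restrict d (A k) t ∈ R k)) :
    proj d O Jm = proj d O J := by
  set S : Finset α := (Finset.univ.filter (fun k => k ≠ i ∧ k ≠ j)).sup A with hS
  have hSle : S ≤ Finset.univ.sup A := Finset.sup_mono (Finset.filter_subset _ _)
  have hAkS : ∀ k : Fin n, k ≠ i → k ≠ j → A k ≤ S := fun k h1 h2 =>
    Finset.le_sup (by simp [h1, h2])
  have hAmsub : Am ⊆ A i ∪ A j := by rw [hAm]; exact Finset.inter_subset_right
  have hAisup : A i ≤ Finset.univ.sup A := Finset.le_sup (Finset.mem_univ i)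
  have hAjsup : A j ≤ Finset.univ.sup A := Finset.le_sup (Finset.mem_univ j)
  have hOAm : ∀ a, a ∈ O → a ∈ A i ∪ A j → a ∈ Am := fun a ha hb => by
    rw [hAm]; exact Finset.mem_inter.mpr ⟨Finset.mem_union_left _ ha, hb⟩
  apply Finset.ext
  intro u
  simp only [proj, Finset.mem_image]
  constructor
  · rintro ⟨t', ht', rfl⟩
    obtain ⟨hsupp, hmem, hothers⟩ := (hJm t').mp ht'
    rw [hRm, proj, Finset.mem_image] at hmem
    obtain ⟨w, hw, hwm⟩ := hmem
    rw [join, Finset.mem_image] at hw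
    obtain ⟨p, hp, rfl⟩ := hw
    rw [Finset.mem_filter, Finset.mem_product] at hp
    obtain ⟨⟨hr, hs⟩, hagree⟩ := hp
    set c : α → V := combine d (A i) (A j) p.1 p.2 with hc
    set t : α → V := fun a => if a ∈ A i ∪ A j then c a else t' a with ht
    have hcAm : ∀ a ∈ Am, c a = t' a := fun a ha => by
      have := congrFun hwm a
      rwa [restrict_apply_of_mem d ha, restrict_apply_of_mem d ha] at this
    have htAm : ∀ a ∈ Am, t a = t' a := fun a ha => by
      rw [ht]; simp only [hAmsub ha, if_pos]; exact hcAm a ha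
    refine ⟨t, (hJ t).mpr ⟨?_, ?_⟩, ?_⟩
    · funext a
      by_cases hab : a ∈ A i ∪ A j
      · rw [restrict_apply_of_mem d
          (Finset.mem_union.mp hab |>.elim (fun h => hAisup h) (fun h => hAjsup h))]
      · by_cases hsup : a ∈ Finset.univ.sup A
        · rw [restrict_apply_of_mem d hsup]
        · rw [restrict_apply_of_not_mem d hsup, ht]
          simp only [hab, if_neg, if_false]
          have := congrFun hsupp a
          rw [restrict_apply_of_not_mem d (fun h => by
            rcases Finset.mem_union.mp h with h | h
            · exact hab (hAmsub h)
            · exact hsup (hSle h))] at this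
          exact this
    · intro k
      by_cases hki : k = i
      · subst hki
        have : restrict d (A k) t = p.1 := by
          funext a
          by_cases ha : a ∈ A k
          · rw [restrict_apply_of_mem d ha, ht]
            simp only [Finset.mem_union, ha, true_or, if_pos, hc, combine, ha]
          · rw [restrict_apply_of_not_mem d ha]
            have := congrFun (hRel k p.1 hr) a
            rw [restrict_apply_of_not_mem d ha] at this
            exact this
        rw [this]; exact hr
      · by_cases hkj : k = j
        · subst hkj
          have : restrict d (A k) t = p.2 := by
            funext a
            by_cases ha : a ∈ A k
            · rw [restrict_apply_of_mem d ha, ht]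
              simp only [Finset.mem_union, ha, or_true, if_pos]
              rw [hc]
              unfold combine
              by_cases hai : a ∈ A i
              · simp only [hai, if_pos]
                exact hagree a (Finset.mem_inter.mpr ⟨hai, ha⟩)
              · simp [hai, ha]
            · rw [restrict_apply_of_not_mem d ha]
              have := congrFun (hRel k p.2 hs) a
              rw [restrict_apply_of_not_mem d ha] at this
              exact this
          rw [this]; exact hs
        · have : restrict d (A k) t = restrict d (A k) t' := by
            funext a
            by_cases ha : a ∈ A k
            · rw [restrict_apply_of_mem d ha, restrict_apply_of_mem d ha]
              by_cases hab : a ∈ A i ∪ A j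
              · have haAm : a ∈ Am := by
                  rw [hAm]
                  exact Finset.mem_inter.mpr
                    ⟨hcond k hki hkj (Finset.mem_inter.mpr ⟨ha, hab⟩), hab⟩
                exact htAm a haAm
              · rw [ht]; simp [hab]
            · rw [restrict_apply_of_not_mem d ha, restrict_apply_of_not_mem d ha]
          rw [this]; exact hothers k hki hkj
    · funext a
      by_cases ha : a ∈ O
      · rw [restrict_apply_of_mem d ha, restrict_apply_of_mem d ha]
        by_cases hab : a ∈ A i ∪ A j
        · exact htAm a (hOAm a ha hab)
        · rw [ht]; simp [hab]
      · rw [restrict_apply_of_not_mem d ha, restrict_apply_of_not_mem d ha]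
  · rintro ⟨t, htJ, rfl⟩
    obtain ⟨hsupp, hall⟩ := (hJ t).mp htJ
    set t' : α → V := restrict d (Am ∪ S) t with ht'
    have ht'eq : ∀ a ∈ Am ∪ S, t' a = t a := fun a ha =>
      restrict_apply_of_mem d ha t
    refine ⟨t', (hJm t').mpr ⟨?_, ?_, ?_⟩, ?_⟩
    · exact restrict_restrict_of_subset d (le_refl _) t
    · rw [hRm, proj, Finset.mem_image]
      refine ⟨combine d (A i) (A j) (restrict d (A i) t) (restrict d (A j) t), ?_, ?_⟩
      · rw [join, Finset.mem_image]
        refine ⟨(restrict d (A i) t, restrict d (A j) t), ?_, rfl⟩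
        rw [Finset.mem_filter, Finset.mem_product]
        refine ⟨⟨hall i, hall j⟩, fun a ha => ?_⟩
        obtain ⟨hai, haj⟩ := Finset.mem_inter.mp ha
        simp only [restrict_apply_of_mem d hai, restrict_apply_of_mem d haj]
      · funext a
        by_cases ha : a ∈ Am
        · rw [restrict_apply_of_mem d ha, restrict_apply_of_mem d ha]
          have hab := hAmsub ha
          unfold combine
          have ht'a := ht'eq a (Finset.mem_union_left _ ha)
          by_cases hai : a ∈ A i
          · rw [if_pos hai, restrict_apply_of_mem d hai, ht'a]
          · have haj : a ∈ A j := (Finset.mem_union.mp hab).resolve_left hai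
            rw [if_neg hai, if_pos haj, restrict_apply_of_mem d haj, ht'a]
        · rw [restrict_apply_of_not_mem d ha, restrict_apply_of_not_mem d ha]
    · intro k hki hkj
      have : restrict d (A k) t' = restrict d (A k) t := by
        funext a
        by_cases ha : a ∈ A k
        · rw [restrict_apply_of_mem d ha, restrict_apply_of_mem d ha]
          exact ht'eq a (Finset.mem_union_right _ (hAkS k hki hkj ha))
        · rw [restrict_apply_of_not_mem d ha, restrict_apply_of_not_mem d ha]
      rw [this]; exact hall k
    · funext a
      by_cases ha : a ∈ O
      · rw [restrict_apply_of_mem d ha, restrict_apply_of_mem d ha]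
        by_cases hms : a ∈ Am ∪ S
        · exact ht'eq a hms
        · rw [ht', restrict_apply_of_not_mem d hms]
          by_cases hsup : a ∈ Finset.univ.sup A
          · exfalso
            obtain ⟨k, _, hk⟩ := Finset.mem_sup.mp hsup
            by_cases hki : k = i
            · exact hms (Finset.mem_union_left _
                (hOAm a ha (Finset.mem_union_left _ (hki ▸ hk))))
            · by_cases hkj : k = j
              · exact hms (Finset.mem_union_left _
                  (hOAm a ha (Finset.mem_union_right _ (hkj ▸ hk))))
              · exact hms (Finset.mem_union_right _ (hAkS k hki hkj hk))
          · have := congrFun hsupp a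
            rw [restrict_apply_of_not_mem d hsup] at this
            exact this
      · rw [restrict_apply_of_not_mem d ha, restrict_apply_of_not_mem d ha]
end

section
/- For annotated relations over a commutative semiring, replacing a child relation S (over B) by its aggregation π̃_{A∩B} S (summing annotations over projected-away attributes) and multiplying into the parent R (over A) preserves the annotated query result when no output attribute of S lies outside A: for every tuple u over the output attributes, the annotation of u in π̃_O(R ⋈ S) equals its annotation in π̃_{O∩A}(R ⋈ π̃_{A∩B} S), assuming O ∩ B ⊆ A. -/
open Finset

variable {α V : Type*}

variable {K : Type*} [CommSemiring K]

/-- Annotated natural join: the annotation of a combined tuple is the product of the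
annotations of its two matching constituents. -/
noncomputable def ajoin [DecidableEq α] [DecidableEq V]
    (d : V) (A B : Finset α) (R S : (α → V) →₀ K) : (α → V) →₀ K :=
  R.sum fun t r => S.sum fun s k =>
    if ∀ a ∈ A ∩ B, t a = s a then Finsupp.single (combine d A B t s) (r * k) else 0

/-- Annotated projection onto `X`: sum annotations over all tuples with the same
restriction to `X`. -/
noncomputable def aproj [DecidableEq α] (d : V) (X : Finset α)
    (T : (α → V) →₀ K) : (α → V) →₀ K :=
  T.sum fun t k => Finsupp.single (restrict d X t) k

/-- An annotated relation is over attribute set `A` if all tuples with nonzero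
annotation are supported on `A`. -/
def aRelOver [DecidableEq α] (d : V) (A : Finset α) (R : (α → V) →₀ K) : Prop :=
  ∀ t, R t ≠ 0 → restrict d A t = t


open scoped Classical in
lemma aproj_apply' [DecidableEq α] (d : V) (X : Finset α)
    (T : (α → V) →₀ K) (u : α → V) :
    aproj d X T u = T.sum fun t k => if restrict d X t = u then k else 0 := by
  rw [aproj, Finsupp.sum_apply]
  refine Finsupp.sum_congr fun t ht => ?_
  simp [Finsupp.single_apply]

open scoped Classical in
lemma aproj_ajoin_apply [DecidableEq α] [DecidableEq V]
    (d : V) (A B X : Finset α) (R S : (α → V) →₀ K) (u : α → V) :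
    aproj d X (ajoin d A B R S) u
      = R.sum fun t r => S.sum fun s k =>
          if (∀ a ∈ A ∩ B, t a = s a) ∧ restrict d X (combine d A B t s) = u
          then r * k else 0 := by
  have h0 : ∀ t' : α → V, (if restrict d X t' = u then (0:K) else 0) = 0 := by
    intro t'; split <;> rfl
  have h1 : ∀ (t' : α → V) (b₁ b₂ : K),
      (if restrict d X t' = u then b₁ + b₂ else 0)
        = (if restrict d X t' = u then b₁ else 0)
          + (if restrict d X t' = u then b₂ else 0) := by
    intro t' b₁ b₂; split <;> simp
  rw [aproj_apply', ajoin, Finsupp.sum_sum_index (h := fun t' k => if _root_.restrict d X t' = u then k else 0) h0 h1]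
  refine Finsupp.sum_congr fun t ht => ?_
  rw [Finsupp.sum_sum_index (h := fun t' k => if _root_.restrict d X t' = u then k else 0) h0 h1]
  refine Finsupp.sum_congr fun s hs => ?_
  by_cases hc : ∀ a ∈ A ∩ B, t a = s a
  · rw [if_pos hc, Finsupp.sum_single_index
      (h := fun t' k => if _root_.restrict d X t' = u then k else 0) (h0 _)]
    exact (if_congr (and_iff_right hc) rfl rfl).symm
  · rw [if_neg hc, Finsupp.sum_zero_index]
    exact (if_neg (fun h => hc h.1)).symm

lemma restrict_combine_left [DecidableEq α] (d : V) (A B O : Finset α)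
    (hO : O ∩ B ⊆ A) (t s : α → V) :
    restrict d O (combine d A B t s) = restrict d (O ∩ A) t := by
  funext a
  by_cases hOa : a ∈ O
  · by_cases hAa : a ∈ A
    · simp [_root_.restrict, combine, hOa, hAa, Finset.mem_inter]
    · have hBa : a ∉ B := fun hB => hAa (hO (Finset.mem_inter.2 ⟨hOa, hB⟩))
      simp [_root_.restrict, combine, hOa, hAa, hBa, Finset.mem_inter]
  · simp [_root_.restrict, combine, hOa, Finset.mem_inter]

lemma restrict_combine_right [DecidableEq α] (d : V) (A O : Finset α) (B' : Finset α)
    (t s' : α → V) :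
    restrict d (O ∩ A) (combine d A B' t s') = restrict d (O ∩ A) t := by
  funext a
  by_cases hAa : a ∈ A <;> by_cases hOa : a ∈ O <;>
    simp [_root_.restrict, combine, hAa, hOa, Finset.mem_inter]

lemma compat_iff [DecidableEq α] (d : V) (A B : Finset α) (t s : α → V) :
    (∀ a ∈ A ∩ (A ∩ B), t a = restrict d (A ∩ B) s a) ↔
      (∀ a ∈ A ∩ B, t a = s a) := by
  constructor
  · intro h a ha
    have h2 := h a (Finset.mem_inter.2 ⟨(Finset.mem_inter.1 ha).1, ha⟩)
    rwa [_root_.restrict, if_pos ha] at h2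
  · intro h a ha
    have ha' := (Finset.mem_inter.1 ha).2
    rw [_root_.restrict, if_pos (Finset.mem_inter.1 ha).2]
    exact h a (Finset.mem_inter.1 ha).2

/-- early aggregation is correct for annotated relations over a
commutative semiring: when `O ∩ B ⊆ A`, replacing `S` by its aggregation
`π̃_{A∩B} S` preserves the annotated query result on every output tuple. -/
theorem early_aggregation_correct [DecidableEq α] [DecidableEq V]
    (d : V) (A B O : Finset α) (R S : (α → V) →₀ K)
    (hR : aRelOver d A R) (hS : aRelOver d B S) (hO : O ∩ B ⊆ A) :
    ∀ u : α → V,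
      aproj d O (ajoin d A B R S) u
        = aproj d (O ∩ A) (ajoin d A (A ∩ B) R (aproj d (A ∩ B) S)) u := by
  intro u
  classical
  rw [aproj_ajoin_apply, aproj_ajoin_apply]
  refine Finsupp.sum_congr fun t ht => ?_
  set r := R t with hr
  have h0 : ∀ s' : α → V,
      (if (∀ a ∈ A ∩ (A ∩ B), t a = s' a) ∧
          restrict d (O ∩ A) (combine d A (A ∩ B) t s') = u
        then r * (0:K) else 0) = 0 := by
    intro s'; split <;> simp
  have h1 : ∀ (s' : α → V) (b₁ b₂ : K),
      (if (∀ a ∈ A ∩ (A ∩ B), t a = s' a) ∧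
          restrict d (O ∩ A) (combine d A (A ∩ B) t s') = u
        then r * (b₁ + b₂) else 0)
      = (if (∀ a ∈ A ∩ (A ∩ B), t a = s' a) ∧
          restrict d (O ∩ A) (combine d A (A ∩ B) t s') = u
        then r * b₁ else 0)
        + (if (∀ a ∈ A ∩ (A ∩ B), t a = s' a) ∧
          restrict d (O ∩ A) (combine d A (A ∩ B) t s') = u
        then r * b₂ else 0) := by
    intro s' b₁ b₂; split <;> simp [mul_add]
  rw [aproj, Finsupp.sum_sum_index (h := fun s' k =>
      if (∀ a ∈ A ∩ (A ∩ B), t a = s' a) ∧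
          _root_.restrict d (O ∩ A) (combine d A (A ∩ B) t s') = u
        then r * k else 0) h0 h1]
  refine Finsupp.sum_congr fun s hs => ?_
  rw [Finsupp.sum_single_index (h := fun s' k =>
      if (∀ a ∈ A ∩ (A ∩ B), t a = s' a) ∧
          _root_.restrict d (O ∩ A) (combine d A (A ∩ B) t s') = u
        then r * k else 0) (h0 _)]
  refine if_congr ?_ rfl rfl
  rw [compat_iff, restrict_combine_left d A B O hO, restrict_combine_right]
end
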